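/- For d-tuples X, Y of bounded operators on H, the Euclidean operator radius of the d-tuple of operators [[X_k, Y_k],[Y_k, X_k]] on H ⊕ H equals max{w_e(X − Y), w_e(X + Y)}. -/

import Mathlib

noncomputable def jnorm {H : Type*} [NormedAddCommGroup H] [InnerProductSpace ℂ H]
    {d : ℕ} (T : Fin d → H →L[ℂ] H) : ℝ :=
  sSup {r | ∃ x : H, ‖x‖ = 1 ∧ r = Real.sqrt (∑ k, ‖T k x‖ ^ 2)}

noncomputable def we {H : Type*} [NormedAddCommGroup H] [InnerProductSpace ℂ H]
    {d : ℕ} (T : Fin d → H →L[ℂ] H) : ℝ :=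
  sSup {r | ∃ x : H, ‖x‖ = 1 ∧ r = Real.sqrt (∑ k, ‖(inner ℂ (T k x) x : ℂ)‖ ^ 2)}

noncomputable def blk {H : Type*} [NormedAddCommGroup H] [InnerProductSpace ℂ H]
    (A B C D : H →L[ℂ] H) : WithLp 2 (H × H) →L[ℂ] WithLp 2 (H × H) :=
  (WithLp.prodContinuousLinearEquiv 2 ℂ H H).symm.toContinuousLinearMap.comp
    (((A.comp (ContinuousLinearMap.fst ℂ H H) + B.comp (ContinuousLinearMap.snd ℂ H H)).prod
      (C.comp (ContinuousLinearMap.fst ℂ H H) + D.comp (ContinuousLinearMap.snd ℂ H H))).comp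
      (WithLp.prodContinuousLinearEquiv 2 ℂ H H).toContinuousLinearMap)

section helpers
variable {H : Type*} [NormedAddCommGroup H] [InnerProductSpace ℂ H] {d : ℕ}

lemma blk_inner (A B C D : H →L[ℂ] H) (u : WithLp 2 (H × H)) :
    (inner ℂ (blk A B C D u) u : ℂ)
      = inner ℂ (A u.fst + B u.snd) u.fst + inner ℂ (C u.fst + D u.snd) u.snd := by
  rw [WithLp.prod_inner_apply]
  simp [blk, inner_add_left]

lemma we_nonneg (T : Fin d → H →L[ℂ] H) : 0 ≤ we T := by
  apply Real.sSup_nonneg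
  rintro r ⟨x, hx, rfl⟩
  exact Real.sqrt_nonneg _

lemma we_bdd (T : Fin d → H →L[ℂ] H) :
    BddAbove {r | ∃ x : H, ‖x‖ = 1 ∧ r = Real.sqrt (∑ k, ‖(inner ℂ (T k x) x : ℂ)‖ ^ 2)} := by
  refine ⟨Real.sqrt (∑ k, ‖T k‖ ^ 2), ?_⟩
  rintro r ⟨x, hx, rfl⟩
  apply Real.sqrt_le_sqrt
  apply Finset.sum_le_sum
  intro k _
  have h1 : ‖(inner ℂ ((T k) x) x : ℂ)‖ ≤ ‖(T k) x‖ * ‖x‖ := norm_inner_le_norm _ _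
  have h2 : ‖(T k) x‖ ≤ ‖T k‖ * ‖x‖ := (T k).le_opNorm x
  have h3 : (0:ℝ) ≤ ‖(inner ℂ ((T k) x) x : ℂ)‖ := norm_nonneg _
  rw [hx] at h1 h2
  nlinarith

lemma sqrt_inner_le (T : Fin d → H →L[ℂ] H) (p : H) :
    Real.sqrt (∑ k, ‖(inner ℂ ((T k) p) p : ℂ)‖ ^ 2) ≤ ‖p‖ ^ 2 * we T := by
  rcases eq_or_ne p 0 with rfl | hp
  · simp
  · have hpn : (0:ℝ) < ‖p‖ := norm_pos_iff.mpr hp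
    set c : ℝ := ‖p‖⁻¹ with hc
    have hcpos : 0 < c := inv_pos.mpr hpn
    have hx : ‖(c : ℂ) • p‖ = 1 := by
      rw [norm_smul, Complex.norm_real, Real.norm_eq_abs, abs_of_pos hcpos, hc]
      field_simp
    have key : ∀ k, ‖(inner ℂ ((T k) ((c:ℂ) • p)) ((c:ℂ) • p) : ℂ)‖ ^ 2
        = (c^2)^2 * ‖(inner ℂ ((T k) p) p : ℂ)‖ ^ 2 := by
      intro k
      rw [map_smul, inner_smul_left, inner_smul_right, Complex.conj_ofReal]
      rw [norm_mul, norm_mul, Complex.norm_real, Real.norm_eq_abs, abs_of_pos hcpos]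
      ring
    have hmem : Real.sqrt (∑ k, ‖(inner ℂ ((T k) ((c:ℂ) • p)) ((c:ℂ) • p) : ℂ)‖ ^ 2)
        ≤ we T := le_csSup (we_bdd T) ⟨(c:ℂ) • p, hx, rfl⟩
    have hsum : (∑ k, ‖(inner ℂ ((T k) ((c:ℂ) • p)) ((c:ℂ) • p) : ℂ)‖ ^ 2)
        = (c^2)^2 * ∑ k, ‖(inner ℂ ((T k) p) p : ℂ)‖ ^ 2 := by
      rw [Finset.mul_sum]; exact Finset.sum_congr rfl fun k _ => key k
    rw [hsum, Real.sqrt_mul (by positivity), Real.sqrt_sq (by positivity)] at hmem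
    have hc2 : c ^ 2 * ‖p‖ ^ 2 = 1 := by
      rw [hc]; field_simp
    calc Real.sqrt (∑ k, ‖(inner ℂ ((T k) p) p : ℂ)‖ ^ 2)
        = ‖p‖^2 * (c^2 * Real.sqrt (∑ k, ‖(inner ℂ ((T k) p) p : ℂ)‖ ^ 2)) := by
          rw [← mul_assoc, mul_comm (‖p‖^2), hc2, one_mul]
      _ ≤ ‖p‖^2 * we T := mul_le_mul_of_nonneg_left hmem (by positivity)

lemma blk_inner_half (Xk Yk : H →L[ℂ] H) (u : WithLp 2 (H × H)) :
    (inner ℂ (blk Xk Yk Yk Xk u) u : ℂ)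
      = (1/2 : ℂ) * inner ℂ ((Xk + Yk) (u.fst + u.snd)) (u.fst + u.snd)
        + (1/2 : ℂ) * inner ℂ ((Xk - Yk) (u.fst - u.snd)) (u.fst - u.snd) := by
  rw [blk_inner]
  simp only [ContinuousLinearMap.add_apply, ContinuousLinearMap.sub_apply, map_add, map_sub,
    inner_add_left, inner_add_right, inner_sub_left, inner_sub_right]
  ring

lemma aux_le (X Y : Fin d → H →L[ℂ] H) (ε : ℝ) (hεe : ε = 1 ∨ ε = -1) (x : H) (hx : ‖x‖ = 1) :
    Real.sqrt (∑ k, ‖(inner ℂ ((X k) x + ((ε:ℂ)) • ((Y k) x)) x : ℂ)‖ ^ 2)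
      ≤ we (fun k => blk (X k) (Y k) (Y k) (X k)) := by
  set a : ℝ := (Real.sqrt 2)⁻¹ with ha
  have h2 : (0:ℝ) < Real.sqrt 2 := Real.sqrt_pos.mpr (by norm_num)
  have hapos : 0 < a := inv_pos.mpr h2
  have haa : a ^ 2 = 1/2 := by
    rw [ha, inv_pow, Real.sq_sqrt (by norm_num : (0:ℝ) ≤ 2)]; norm_num
  have hε : ε ^ 2 = 1 := by rcases hεe with rfl | rfl <;> norm_num
  set u : WithLp 2 (H × H) := (WithLp.equiv 2 (H × H)).symm ((a:ℂ) • x, ((ε*a:ℝ):ℂ) • x) with hudef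
  have hufst : u.fst = (a:ℂ) • x := rfl
  have husnd : u.snd = ((ε*a:ℝ):ℂ) • x := rfl
  have hεa : |ε| = 1 := by rcases hεe with rfl | rfl <;> norm_num
  have hu : ‖u‖ = 1 := by
    have hsq : ‖u‖ ^ 2 = 1 := by
      rw [WithLp.prod_norm_sq_eq_of_L2, hufst, husnd, norm_smul, norm_smul, hx,
        Complex.norm_real, Complex.norm_real, Real.norm_eq_abs, Real.norm_eq_abs,
        abs_of_pos hapos, abs_mul, hεa, abs_of_pos hapos]
      nlinarith
    nlinarith [norm_nonneg u]
  have hpt : ∀ k, (inner ℂ (blk (X k) (Y k) (Y k) (X k) u) u : ℂ)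
      = inner ℂ ((X k) x + ((ε:ℂ)) • ((Y k) x)) x := by
    intro k
    rw [blk_inner, hufst, husnd]
    have ha2 : ((a:ℂ))^2 = 1/2 := by
      rw [show ((a:ℂ)) = ((a:ℝ):ℂ) from rfl, ← Complex.ofReal_pow, haa]; norm_num
    have hε2 : ((ε:ℂ))^2 = 1 := by
      rw [show ((ε:ℂ)) = ((ε:ℝ):ℂ) from rfl, ← Complex.ofReal_pow, hε]; norm_num
    simp only [map_smul, inner_add_left, inner_smul_left, inner_smul_right, Complex.conj_ofReal]
    push_cast
    linear_combination ((1+(ε:ℂ)^2) * (inner ℂ ((X k) x) x : ℂ)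
      + 2*(ε:ℂ)*(inner ℂ ((Y k) x) x : ℂ)) * ha2 + ((inner ℂ ((X k) x) x : ℂ)/2) * hε2
  have hsum : (∑ k, ‖(inner ℂ ((X k) x + ((ε:ℂ)) • ((Y k) x)) x : ℂ)‖ ^ 2)
      = ∑ k, ‖(inner ℂ (blk (X k) (Y k) (Y k) (X k) u) u : ℂ)‖ ^ 2 :=
    Finset.sum_congr rfl fun k _ => by rw [hpt k]
  rw [hsum]
  exact le_csSup (we_bdd _) ⟨u, hu, rfl⟩

end helpers

theorem stmt15 {H : Type*} [NormedAddCommGroup H] [InnerProductSpace ℂ H] {d : ℕ} (X Y : Fin d → H →L[ℂ] H) :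
    we (fun k => blk (X k) (Y k) (Y k) (X k))
      = max (we (fun k => X k - Y k)) (we (fun k => X k + Y k)) := by
  set mx : ℝ := max (we (fun k => X k - Y k)) (we (fun k => X k + Y k)) with hmx
  have hmx0 : 0 ≤ mx := le_trans (we_nonneg _) (le_max_left _ _)
  apply le_antisymm
  · apply Real.sSup_le _ hmx0
    rintro r ⟨u, hu, rfl⟩
    set p : H := u.fst + u.snd with hp
    set q : H := u.fst - u.snd with hq
    set F : EuclideanSpace ℂ (Fin d) :=
      WithLp.toLp 2 fun k => (inner ℂ (blk (X k) (Y k) (Y k) (X k) u) u : ℂ) with hF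
    set G : EuclideanSpace ℂ (Fin d) := WithLp.toLp 2 fun k => (inner ℂ ((X k + Y k) p) p : ℂ) with hG
    set K : EuclideanSpace ℂ (Fin d) := WithLp.toLp 2 fun k => (inner ℂ ((X k - Y k) q) q : ℂ) with hK
    have hFeq : F = (1/2 : ℂ) • G + (1/2 : ℂ) • K :=
      WithLp.ofLp_injective 2 (funext fun k => blk_inner_half (X k) (Y k) u)
    have hFnorm : Real.sqrt (∑ k, ‖(inner ℂ (blk (X k) (Y k) (Y k) (X k) u) u : ℂ)‖ ^ 2)
        = ‖F‖ := by rw [EuclideanSpace.norm_eq]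
    have hGnorm : ‖G‖ = Real.sqrt (∑ k, ‖(inner ℂ ((X k + Y k) p) p : ℂ)‖ ^ 2) := by
      rw [EuclideanSpace.norm_eq]
    have hKnorm : ‖K‖ = Real.sqrt (∑ k, ‖(inner ℂ ((X k - Y k) q) q : ℂ)‖ ^ 2) := by
      rw [EuclideanSpace.norm_eq]
    have hGle : ‖G‖ ≤ ‖p‖ ^ 2 * mx := by
      rw [hGnorm]
      refine le_trans (sqrt_inner_le (fun k => X k + Y k) p) ?_
      exact mul_le_mul_of_nonneg_left (le_max_right _ _) (by positivity)
    have hKle : ‖K‖ ≤ ‖q‖ ^ 2 * mx := by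
      rw [hKnorm]
      refine le_trans (sqrt_inner_le (fun k => X k - Y k) q) ?_
      exact mul_le_mul_of_nonneg_left (le_max_left _ _) (by positivity)
    have hpar : ‖p‖ ^ 2 + ‖q‖ ^ 2 = 2 := by
      have h1 := parallelogram_law_with_norm ℂ u.fst u.snd
      have h2 : ‖u‖ ^ 2 = ‖u.fst‖ ^ 2 + ‖u.snd‖ ^ 2 := WithLp.prod_norm_sq_eq_of_L2 u
      rw [hu] at h2
      rw [hp, hq]
      nlinarith
    have htri : ‖F‖ ≤ (1/2) * ‖G‖ + (1/2) * ‖K‖ := by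
      rw [hFeq]
      refine le_trans (norm_add_le _ _) ?_
      rw [norm_smul, norm_smul]
      simp
    rw [hFnorm]
    calc ‖F‖ ≤ (1/2) * ‖G‖ + (1/2) * ‖K‖ := htri
      _ ≤ (1/2) * (‖p‖ ^ 2 * mx) + (1/2) * (‖q‖ ^ 2 * mx) := by
          gcongr <;> norm_num
      _ = ((‖p‖ ^ 2 + ‖q‖ ^ 2) / 2) * mx := by ring
      _ = mx := by rw [hpar]; ring
  · apply max_le
    · apply Real.sSup_le _ (we_nonneg _)
      rintro r ⟨x, hx, rfl⟩
      have h := aux_le X Y (-1) (Or.inr rfl) x hx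
      have hs : (∑ k, ‖(inner ℂ (((X k - Y k)) x) x : ℂ)‖ ^ 2)
          = ∑ k, ‖(inner ℂ ((X k) x + (((-1:ℝ):ℂ)) • ((Y k) x)) x : ℂ)‖ ^ 2 :=
        Finset.sum_congr rfl fun k _ => by
          simp [ContinuousLinearMap.sub_apply, sub_eq_add_neg]
      refine le_trans (le_of_eq ?_) h
      rw [hs]
    · apply Real.sSup_le _ (we_nonneg _)
      rintro r ⟨x, hx, rfl⟩
      have h := aux_le X Y 1 (Or.inl rfl) x hx
      have hs : (∑ k, ‖(inner ℂ (((X k + Y k)) x) x : ℂ)‖ ^ 2)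
          = ∑ k, ‖(inner ℂ ((X k) x + (((1:ℝ):ℂ)) • ((Y k) x)) x : ℂ)‖ ^ 2 :=
        Finset.sum_congr rfl fun k _ => by
          simp [ContinuousLinearMap.add_apply]
      refine le_trans (le_of_eq ?_) h
      rw [hs]
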